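/- arXiv:math/0309013 — 8 statements merged into one kernel-verified Lean document; each statement's English description precedes it below -/
import Mathlib

section
/- If V is a finite-dimensional real vector space admitting a generalized complex structure, then the real dimension of V is even. -/
open Module LinearMap

/-- The standard pairing `⟨v+f, w+g⟩ = -(1/2)(f(w)+g(v))` on `V ⊕ V*`. -/
noncomputable def gcPair (V : Type*) [AddCommGroup V] [Module ℝ V]
    (x y : V × Module.Dual ℝ V) : ℝ :=
  -(1/2) * (x.2 y.1 + y.2 x.1)

/-- A generalized complex structure on `V`: an ℝ-linear endomorphism of `V ⊕ V*`
(necessarily an automorphism) with square `-1` preserving the standard pairing. -/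
noncomputable def IsGCS (V : Type*) [AddCommGroup V] [Module ℝ V]
    (J : (V × Module.Dual ℝ V) →ₗ[ℝ] (V × Module.Dual ℝ V)) : Prop :=
  J ∘ₗ J = -LinearMap.id ∧ ∀ x y, gcPair V (J x) (J y) = gcPair V x y

/-!
The pairing has signature `(n, n)` on `V ⊕ V*`, `n = dim V`: it is positive definite on the
graph of `-φ` and negative definite on the graph of `φ`, for `φ : V → V*` the dual of a basis.
Since `𝓙` is an isometry with `𝓙² = -1`, we have `⟨x, 𝓙x⟩ = 0` and `⟨𝓙x, 𝓙x⟩ = ⟨x, x⟩`, so a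
`𝓙`-invariant positive definite subspace `P` can be enlarged by `span {y, 𝓙y}` whenever some
`y ⊥ P` has `⟨y, y⟩ > 0`. A maximal such `P` therefore has a negative semidefinite orthogonal.
Then `P` meets the graph of `φ` and `P^⊥` meets the graph of `-φ` trivially, which forces
`dim P = n`; and `𝓙` restricts to a complex structure on `P`, so `n` is even.
-/

namespace LinearMap.BilinForm

open LinearMap (BilinForm)
open Module.End (invtSubmodule)

variable {M : Type*} [AddCommGroup M] [Module ℝ M]

def PosDefOn (B : BilinForm ℝ M) (P : Submodule ℝ M) : Prop :=
  ∀ x ∈ P, x ≠ 0 → 0 < B x x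

theorem PosDefOn.nonneg {B : BilinForm ℝ M} {P : Submodule ℝ M} (hP : B.PosDefOn P) {x : M}
    (hx : x ∈ P) : 0 ≤ B x x := by
  rcases eq_or_ne x 0 with rfl | hx0
  · simp
  · exact (hP x hx hx0).le

theorem PosDefOn.sup {B : BilinForm ℝ M} (hB : B.IsSymm) {P Q : Submodule ℝ M}
    (hP : B.PosDefOn P) (hQ : B.PosDefOn Q) (hPQ : Q ≤ B.orthogonal P) :
    B.PosDefOn (P ⊔ Q) := by
  intro x hx hx0
  obtain ⟨p, hp, q, hq, rfl⟩ := Submodule.mem_sup.mp hx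
  have hpq : B p q = 0 := hPQ hq p hp
  have hqp : B q p = 0 := by rw [hB.eq]; exact hpq
  have hself : B (p + q) (p + q) = B p p + B q q := by
    simp only [map_add, LinearMap.add_apply, hpq, hqp, add_zero, zero_add]
  rcases eq_or_ne p 0 with rfl | hp0
  · rw [zero_add] at hx0 ⊢
    exact hQ q hq hx0
  · rw [hself]
    linarith [hP p hp hp0, hQ.nonneg hq]

theorem finrank_add_finrank_le_of_posDefOn [FiniteDimensional ℝ M] {B : BilinForm ℝ M}
    {P N : Submodule ℝ M} (hP : B.PosDefOn P) (hN : ∀ x ∈ N, B x x ≤ 0) :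
    finrank ℝ P + finrank ℝ N ≤ finrank ℝ M := by
  have hPN : Disjoint P N := Submodule.disjoint_def.mpr fun x hxP hxN ↦
    by_contra fun hx ↦ (hP x hxP hx).not_ge (hN x hxN)
  exact Submodule.finrank_add_finrank_le_of_disjoint hPN

section ComplexStructure

variable {B : BilinForm ℝ M} {J : M →ₗ[ℝ] M}

theorem apply_self_apply_eq_zero (hB : B.IsSymm) (hJ : ∀ x, J (J x) = -x)
    (hBJ : ∀ x y, B (J x) (J y) = B x y) (x : M) : B x (J x) = 0 := by
  have h := hBJ x (J x)
  rw [hJ, map_neg, hB.eq] at h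
  linarith

theorem orthogonal_mem_invtSubmodule (hJ : ∀ x, J (J x) = -x)
    (hBJ : ∀ x y, B (J x) (J y) = B x y) {P : Submodule ℝ M}
    (hP : P ∈ invtSubmodule J) : B.orthogonal P ∈ invtSubmodule J := by
  intro y hy p hp
  have h := hBJ (J p) y
  rw [hJ, map_neg, LinearMap.neg_apply, hy (J p) (hP hp)] at h
  exact neg_eq_zero.mp h

theorem span_pair_apply_mem_invtSubmodule (hJ : ∀ x, J (J x) = -x) (y : M) :
    Submodule.span ℝ {y, J y} ∈ invtSubmodule J := by
  rw [Module.End.mem_invtSubmodule_iff_map_le, Submodule.map_span_le]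
  rintro x (rfl | rfl)
  · exact Submodule.subset_span (by simp)
  · rw [hJ]
    exact neg_mem (Submodule.subset_span (by simp))

theorem posDefOn_span_pair_apply (hB : B.IsSymm) (hJ : ∀ x, J (J x) = -x)
    (hBJ : ∀ x y, B (J x) (J y) = B x y) {y : M} (hy : 0 < B y y) :
    B.PosDefOn (Submodule.span ℝ {y, J y}) := by
  intro x hx hx0
  obtain ⟨a, b, rfl⟩ := Submodule.mem_span_pair.mp hx
  have hyJy := apply_self_apply_eq_zero hB hJ hBJ y
  have hJyy : B (J y) y = 0 := by rw [hB.eq]; exact hyJy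
  have hself : B (a • y + b • J y) (a • y + b • J y) = (a ^ 2 + b ^ 2) * B y y := by
    simp only [map_add, map_smul, LinearMap.add_apply, LinearMap.smul_apply, smul_eq_mul, hyJy,
      hJyy, hBJ]
    ring
  have hab : a ≠ 0 ∨ b ≠ 0 := by
    by_contra! h
    simp [h.1, h.2] at hx0
  have : 0 < a ^ 2 + b ^ 2 := by rcases hab with h | h <;> positivity
  rw [hself]
  positivity

theorem exists_invtSubmodule_posDefOn_orthogonal_nonpos [FiniteDimensional ℝ M]
    (hB : B.IsSymm) (hJ : ∀ x, J (J x) = -x) (hBJ : ∀ x y, B (J x) (J y) = B x y) :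
    ∃ P ∈ invtSubmodule J, B.PosDefOn P ∧ ∀ y ∈ B.orthogonal P, B y y ≤ 0 := by
  obtain ⟨P, ⟨hPJ, hPpos⟩, hmax⟩ := wellFounded_gt.has_min
    {P : Submodule ℝ M | P ∈ invtSubmodule J ∧ B.PosDefOn P}
    ⟨⊥, invtSubmodule.bot_mem J, fun _ hx hx0 ↦ (hx0 ((Submodule.mem_bot ℝ).mp hx)).elim⟩
  refine ⟨P, hPJ, hPpos, fun y hy ↦ not_lt.mp fun hpos ↦ ?_⟩
  have hyP : y ∉ P := fun hyP ↦ hpos.ne' (hy y hyP)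
  set Q := Submodule.span ℝ {y, J y}
  have hQP : Q ≤ B.orthogonal P := by
    rw [Submodule.span_le, Set.insert_subset_iff, Set.singleton_subset_iff]
    exact ⟨hy, orthogonal_mem_invtSubmodule hJ hBJ hPJ hy⟩
  refine hmax (P ⊔ Q) ⟨invtSubmodule.sup_mem hPJ (span_pair_apply_mem_invtSubmodule hJ y),
    hPpos.sup hB (posDefOn_span_pair_apply hB hJ hBJ hpos) hQP⟩ ?_
  exact lt_of_le_of_ne le_sup_left fun h ↦
    hyP (h ▸ Submodule.mem_sup_right (Submodule.subset_span (by simp)))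

end ComplexStructure

end LinearMap.BilinForm

theorem even_finrank_of_apply_apply_eq_neg {M : Type*} [AddCommGroup M] [Module ℝ M]
    [FiniteDimensional ℝ M] {J : M →ₗ[ℝ] M} (hJ : ∀ x, J (J x) = -x) :
    Even (finrank ℝ M) := by
  have hJJ : J ∘ₗ J = (-1 : ℝ) • LinearMap.id := LinearMap.ext fun x ↦ by simp [hJ]
  have hdet : J.det * J.det = (-1) ^ finrank ℝ M := by
    rw [← LinearMap.det_comp, hJJ, LinearMap.det_smul, LinearMap.det_id, mul_one]
  refine (Nat.even_or_odd _).resolve_right fun hodd ↦ ?_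
  rw [hodd.neg_one_pow] at hdet
  nlinarith [mul_self_nonneg J.det]

namespace Module.Basis

variable {ι M : Type*} [Fintype ι] [DecidableEq ι] [AddCommGroup M] [Module ℝ M]

theorem toDual_apply_self (b : Basis ι ℝ M) (v : M) : b.toDual v v = ∑ i, b.repr v i ^ 2 := by
  nth_rewrite 2 [← b.sum_repr v]
  simp only [map_sum, map_smul, toDual_apply_left, smul_eq_mul, sq]

theorem toDual_apply_self_nonneg (b : Basis ι ℝ M) (v : M) : 0 ≤ b.toDual v v :=
  b.toDual_apply_self v ▸ Finset.sum_nonneg fun _ _ ↦ sq_nonneg _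

theorem toDual_apply_self_pos (b : Basis ι ℝ M) {v : M} (hv : v ≠ 0) : 0 < b.toDual v v := by
  obtain ⟨i, hi⟩ := DFunLike.ne_iff.mp (b.repr.map_ne_zero_iff.mpr hv)
  rw [b.toDual_apply_self]
  exact Finset.sum_pos' (fun _ _ ↦ sq_nonneg _) ⟨i, Finset.mem_univ i, sq_pos_iff.mpr hi⟩

end Module.Basis

theorem LinearMap.finrank_graph {K M N : Type*} [DivisionRing K] [AddCommGroup M] [Module K M]
    [AddCommGroup N] [Module K N] (f : M →ₗ[K] N) : finrank K f.graph = finrank K M := by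
  rw [graph_eq_range_prod, finrank_range_of_inj fun _ _ h ↦ congr_arg Prod.fst h]

section GeneralizedComplex

variable {V : Type*} [AddCommGroup V] [Module ℝ V]

variable (V) in
noncomputable def gcForm : LinearMap.BilinForm ℝ (V × Module.Dual ℝ V) :=
  LinearMap.mk₂ ℝ (gcPair V)
    (fun _ _ _ ↦ by
      simp only [gcPair, Prod.fst_add, Prod.snd_add, map_add, LinearMap.add_apply]
      ring)
    (fun _ _ _ ↦ by
      simp only [gcPair, Prod.smul_fst, Prod.smul_snd, map_smul, LinearMap.smul_apply, smul_eq_mul]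
      ring)
    (fun _ _ _ ↦ by
      simp only [gcPair, Prod.fst_add, Prod.snd_add, map_add, LinearMap.add_apply]
      ring)
    (fun _ _ _ ↦ by
      simp only [gcPair, Prod.smul_fst, Prod.smul_snd, map_smul, LinearMap.smul_apply, smul_eq_mul]
      ring)

@[simp]
theorem gcForm_apply (x y : V × Module.Dual ℝ V) : gcForm V x y = gcPair V x y := rfl

theorem gcForm_isSymm : (gcForm V).IsSymm :=
  ⟨fun x y ↦ by simp only [gcForm_apply, gcPair]; ring⟩

theorem gcForm_apply_self_of_mem_graph {ψ : V →ₗ[ℝ] Module.Dual ℝ V} {x : V × Module.Dual ℝ V}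
    (hx : x ∈ ψ.graph) : gcForm V x x = -ψ x.1 x.1 := by
  rw [gcForm_apply, gcPair, (mem_graph_iff ψ x).mp hx]
  ring

theorem gcForm_apply_self_nonpos_of_mem_graph_toDual {ι : Type*} [Fintype ι] [DecidableEq ι]
    (b : Basis ι ℝ V) {x : V × Module.Dual ℝ V} (hx : x ∈ b.toDual.graph) :
    gcForm V x x ≤ 0 := by
  rw [gcForm_apply_self_of_mem_graph hx]
  exact neg_nonpos.mpr (b.toDual_apply_self_nonneg x.1)

theorem gcForm_posDefOn_graph_neg_toDual {ι : Type*} [Fintype ι] [DecidableEq ι]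
    (b : Basis ι ℝ V) : (gcForm V).PosDefOn (-b.toDual).graph := by
  intro x hx hx0
  rw [gcForm_apply_self_of_mem_graph hx, LinearMap.neg_apply, LinearMap.neg_apply, neg_neg]
  refine b.toDual_apply_self_pos fun h ↦ hx0 (Prod.ext h ?_)
  rw [(mem_graph_iff _ x).mp hx, h, map_zero, Prod.snd_zero]

end GeneralizedComplex

theorem even_finrank_of_isGCS (V : Type*) [AddCommGroup V] [Module ℝ V]
    [FiniteDimensional ℝ V]
    (J : (V × Module.Dual ℝ V) →ₗ[ℝ] (V × Module.Dual ℝ V)) (hJ : IsGCS V J) :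
    Even (Module.finrank ℝ V) := by
  have hJJ : ∀ x, J (J x) = -x := fun x ↦ by simpa using LinearMap.congr_fun hJ.1 x
  obtain ⟨P, hPJ, hPpos, hPperp⟩ :=
    (gcForm V).exists_invtSubmodule_posDefOn_orthogonal_nonpos gcForm_isSymm hJJ hJ.2
  set b := Module.finBasis ℝ V
  have hP_le := (gcForm V).finrank_add_finrank_le_of_posDefOn hPpos
    fun _ ↦ gcForm_apply_self_nonpos_of_mem_graph_toDual b
  have hPperp_le := (gcForm V).finrank_add_finrank_le_of_posDefOn
    (gcForm_posDefOn_graph_neg_toDual b) hPperp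
  have hPperp_ge := (gcForm V).finrank_add_finrank_orthogonal' P
  have hP : finrank ℝ P = finrank ℝ V := by
    simp only [finrank_graph, finrank_prod, Subspace.dual_finrank_eq] at hP_le hPperp_le hPperp_ge
    omega
  exact hP ▸ even_finrank_of_apply_apply_eq_neg (M := P) (J := J.restrict hPJ)
    fun x ↦ Subtype.ext (hJJ x)
end

section
/- Let V and W be finite-dimensional real vector spaces equipped with generalized complex structures 𝓙_V and 𝓙_W, and let μ : V → W be a linear isomorphism. If the graph Γ = {(v, μ(v)) : v ∈ V} ⊆ V ⊕ W is a generalized Lagrangian subspace of V ⊕ W with respect to the twisted product structure (the direct sum of 𝓙̃_V and 𝓙_W), then μ induces an isomorphism of generalized complex structures: the map μ̂ : V ⊕ V* → W ⊕ W* given by (v, f) ↦ (μ(v), f ∘ μ⁻¹) satisfies μ̂ ∘ 𝓙_V = 𝓙_W ∘ μ̂. -/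
open Module LinearMap

section Blocks

variable (V : Type*) [AddCommGroup V] [Module ℝ V]

noncomputable def blk1 (J : (V × Module.Dual ℝ V) →ₗ[ℝ] (V × Module.Dual ℝ V)) :
    V →ₗ[ℝ] V :=
  (LinearMap.fst ℝ V (Module.Dual ℝ V)) ∘ₗ J ∘ₗ (LinearMap.inl ℝ V (Module.Dual ℝ V))

noncomputable def blk2 (J : (V × Module.Dual ℝ V) →ₗ[ℝ] (V × Module.Dual ℝ V)) :
    Module.Dual ℝ V →ₗ[ℝ] V :=
  (LinearMap.fst ℝ V (Module.Dual ℝ V)) ∘ₗ J ∘ₗ (LinearMap.inr ℝ V (Module.Dual ℝ V))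

noncomputable def blk3 (J : (V × Module.Dual ℝ V) →ₗ[ℝ] (V × Module.Dual ℝ V)) :
    V →ₗ[ℝ] Module.Dual ℝ V :=
  (LinearMap.snd ℝ V (Module.Dual ℝ V)) ∘ₗ J ∘ₗ (LinearMap.inl ℝ V (Module.Dual ℝ V))

noncomputable def blk4 (J : (V × Module.Dual ℝ V) →ₗ[ℝ] (V × Module.Dual ℝ V)) :
    Module.Dual ℝ V →ₗ[ℝ] Module.Dual ℝ V :=
  (LinearMap.snd ℝ V (Module.Dual ℝ V)) ∘ₗ J ∘ₗ (LinearMap.inr ℝ V (Module.Dual ℝ V))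

noncomputable def ofBlocks (A : V →ₗ[ℝ] V) (B : Module.Dual ℝ V →ₗ[ℝ] V)
    (C : V →ₗ[ℝ] Module.Dual ℝ V) (D : Module.Dual ℝ V →ₗ[ℝ] Module.Dual ℝ V) :
    (V × Module.Dual ℝ V) →ₗ[ℝ] (V × Module.Dual ℝ V) :=
  LinearMap.prod
    (A ∘ₗ LinearMap.fst ℝ V (Module.Dual ℝ V) + B ∘ₗ LinearMap.snd ℝ V (Module.Dual ℝ V))
    (C ∘ₗ LinearMap.fst ℝ V (Module.Dual ℝ V) + D ∘ₗ LinearMap.snd ℝ V (Module.Dual ℝ V))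

/-- The twist `𝓙̃ = [[𝓙₁,-𝓙₂],[-𝓙₃,𝓙₄]]` of `𝓙`. -/
noncomputable def gcTwist (J : (V × Module.Dual ℝ V) →ₗ[ℝ] (V × Module.Dual ℝ V)) :
    (V × Module.Dual ℝ V) →ₗ[ℝ] (V × Module.Dual ℝ V) :=
  ofBlocks V (blk1 V J) (-(blk2 V J)) (-(blk3 V J)) (blk4 V J)

end Blocks

section Prod

variable (U V : Type*) [AddCommGroup U] [Module ℝ U] [AddCommGroup V] [Module ℝ V]

/-- The natural identification `(U⊕V) ⊕ (U⊕V)* ≅ (U ⊕ U*) ⊕ (V ⊕ V*)`. -/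
noncomputable def prodPack :
    ((U × V) × Module.Dual ℝ (U × V)) ≃ₗ[ℝ]
      (U × Module.Dual ℝ U) × (V × Module.Dual ℝ V) :=
  ((LinearEquiv.refl ℝ (U × V)).prodCongr (Module.dualProdDualEquivDual ℝ U V).symm).trans
    (LinearEquiv.prodProdProdComm ℝ U V (Module.Dual ℝ U) (Module.Dual ℝ V))

/-- The direct sum of the structures `J_U` and `J_V` on `U ⊕ V`. -/
noncomputable def directSum
    (JU : (U × Module.Dual ℝ U) →ₗ[ℝ] (U × Module.Dual ℝ U))
    (JV : (V × Module.Dual ℝ V) →ₗ[ℝ] (V × Module.Dual ℝ V)) :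
    ((U × V) × Module.Dual ℝ (U × V)) →ₗ[ℝ] ((U × V) × Module.Dual ℝ (U × V)) :=
  (prodPack U V).symm.toLinearMap ∘ₗ (LinearMap.prodMap JU JV) ∘ₗ (prodPack U V).toLinearMap

/-- The twisted product structure on `U ⊕ V`: the direct sum of `𝓙̃_U` and `𝓙_V`. -/
noncomputable def twistedProd
    (JU : (U × Module.Dual ℝ U) →ₗ[ℝ] (U × Module.Dual ℝ U))
    (JV : (V × Module.Dual ℝ V) →ₗ[ℝ] (V × Module.Dual ℝ V)) :
    ((U × V) × Module.Dual ℝ (U × V)) →ₗ[ℝ] ((U × V) × Module.Dual ℝ (U × V)) :=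
  directSum U V (gcTwist U JU) JV

end Prod

section Subspaces

variable {X : Type*} [AddCommGroup X] [Module ℝ X]

/-- A subspace `Γ` of a GC vector space `(X, J)` is generalized isotropic if
`J(Γ ⊕ 0) ⊆ Γ ⊕ Ann(Γ)`. -/
def GenIsotropic (J : (X × Module.Dual ℝ X) →ₗ[ℝ] (X × Module.Dual ℝ X))
    (Γ : Submodule ℝ X) : Prop :=
  ∀ x ∈ Γ, J (x, 0) ∈ Γ.prod Γ.dualAnnihilator

/-- A subspace `Γ` of a GC vector space `(X, J)` is generalized coisotropic if
`J(0 ⊕ Ann(Γ)) ⊆ Γ ⊕ Ann(Γ)`. -/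
def GenCoisotropic (J : (X × Module.Dual ℝ X) →ₗ[ℝ] (X × Module.Dual ℝ X))
    (Γ : Submodule ℝ X) : Prop :=
  ∀ f ∈ Γ.dualAnnihilator, J (0, f) ∈ Γ.prod Γ.dualAnnihilator

/-- A subspace `Γ` of a GC vector space `(X, J)` is generalized Lagrangian if
`Γ ⊕ Ann(Γ)` is stable under `J`. -/
def GenLagrangian (J : (X × Module.Dual ℝ X) →ₗ[ℝ] (X × Module.Dual ℝ X))
    (Γ : Submodule ℝ X) : Prop :=
  ∀ p ∈ Γ.prod Γ.dualAnnihilator, J p ∈ Γ.prod Γ.dualAnnihilator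

end Subspaces

/-!
For `x = (v, f)`, the covector `(-f, f ∘ μ⁻¹)` on `V ⊕ W` annihilates the graph `Γ` of `μ`;
in the coordinates `(V ⊕ V*) ⊕ (W ⊕ W*)`, `Γ ⊕ Ann(Γ)` consists exactly of the points
`((v, -f), μ̂ (v, f))`. Since the twist of `𝓙_V` is `𝓙_V` conjugated by `f ↦ -f`, the
twisted product maps such a point to `((a, -b), 𝓙_W (μ̂ x))` with `(a, b) = 𝓙_V x`, and its
lying in `Γ ⊕ Ann(Γ)` again says precisely `𝓙_W (μ̂ x) = μ̂ (𝓙_V x)`.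
-/

section GraphLagrangian

variable {V W : Type*} [AddCommGroup V] [Module ℝ V] [AddCommGroup W] [Module ℝ W]

theorem gcTwist_apply_neg (J : (V × Dual ℝ V) →ₗ[ℝ] (V × Dual ℝ V)) (v : V) (f : Dual ℝ V) :
    gcTwist V J (v, -f) = ((J (v, f)).1, -(J (v, f)).2) := by
  have hJ : J (v, f) = J (v, 0) + J (0, f) := by rw [← map_add, Prod.mk_add_mk, add_zero, zero_add]
  have hneg : J (0, -f) = -J (0, f) := by rw [← map_neg, Prod.neg_mk, neg_zero]
  simp [gcTwist, ofBlocks, blk1, blk2, blk3, blk4, hJ, hneg, add_comm]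

theorem prodPack_symm_apply (x : V × Dual ℝ V) (y : W × Dual ℝ W) :
    (prodPack V W).symm (x, y) = ((x.1, y.1), x.2.coprod y.2) := by
  apply (prodPack V W).injective
  simp [prodPack]

theorem twistedProd_apply_prodPack_symm (JV : (V × Dual ℝ V) →ₗ[ℝ] (V × Dual ℝ V))
    (JW : (W × Dual ℝ W) →ₗ[ℝ] (W × Dual ℝ W)) (x : V × Dual ℝ V) (y : W × Dual ℝ W) :
    twistedProd V W JV JW ((prodPack V W).symm (x, y)) =
      (prodPack V W).symm (gcTwist V JV x, JW y) := by
  simp [twistedProd, directSum]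

theorem prodPack_symm_mem_graph_prod_dualAnnihilator_iff (g : V →ₗ[ℝ] W)
    (x : V × Dual ℝ V) (y : W × Dual ℝ W) :
    (prodPack V W).symm (x, y) ∈ g.graph.prod g.graph.dualAnnihilator ↔
      y.1 = g x.1 ∧ x.2 + g.dualMap y.2 = 0 := by
  rw [prodPack_symm_apply, Submodule.mem_prod, mem_graph_iff, Submodule.mem_dualAnnihilator]
  refine and_congr Iff.rfl ⟨fun h => LinearMap.ext fun u => by simpa using h (u, g u) (by simp),
    fun h w hw => ?_⟩
  rw [mem_graph_iff] at hw
  simpa [hw] using LinearMap.congr_fun h w.1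

theorem prodPack_symm_neg_mem_graph_prod_dualAnnihilator_iff (μ : V ≃ₗ[ℝ] W)
    (v : V) (f : Dual ℝ V) (y : W × Dual ℝ W) :
    (prodPack V W).symm ((v, -f), y) ∈
        (μ : V →ₗ[ℝ] W).graph.prod (μ : V →ₗ[ℝ] W).graph.dualAnnihilator ↔
      y = μ.prodCongr μ.symm.dualMap (v, f) := by
  rw [prodPack_symm_mem_graph_prod_dualAnnihilator_iff, neg_add_eq_zero, Prod.ext_iff]
  refine and_congr Iff.rfl ⟨fun h => ?_, fun h => ?_⟩ <;> ext <;> simp [h]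

end GraphLagrangian

theorem graph_genLagrangian_implies_iso_general
    (V W : Type*) [AddCommGroup V] [Module ℝ V]
    [AddCommGroup W] [Module ℝ W]
    (JV : (V × Module.Dual ℝ V) →ₗ[ℝ] (V × Module.Dual ℝ V))
    (JW : (W × Module.Dual ℝ W) →ₗ[ℝ] (W × Module.Dual ℝ W))
    (μ : V ≃ₗ[ℝ] W)
    (hgraph : GenLagrangian (twistedProd V W JV JW) (LinearMap.graph μ.toLinearMap)) :
    (μ.prodCongr μ.symm.dualMap).toLinearMap ∘ₗ JV = JW ∘ₗ (μ.prodCongr μ.symm.dualMap).toLinearMap := by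
  refine LinearMap.ext fun ⟨v, f⟩ => ?_
  have hmem := hgraph _ ((prodPack_symm_neg_mem_graph_prod_dualAnnihilator_iff μ v f _).2 rfl)
  rw [twistedProd_apply_prodPack_symm, gcTwist_apply_neg] at hmem
  exact ((prodPack_symm_neg_mem_graph_prod_dualAnnihilator_iff μ _ _ _).1 hmem).symm

theorem graph_genLagrangian_implies_iso
    (V W : Type*) [AddCommGroup V] [Module ℝ V] [FiniteDimensional ℝ V]
    [AddCommGroup W] [Module ℝ W] [FiniteDimensional ℝ W]
    (JV : (V × Module.Dual ℝ V) →ₗ[ℝ] (V × Module.Dual ℝ V))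
    (JW : (W × Module.Dual ℝ W) →ₗ[ℝ] (W × Module.Dual ℝ W))
    (hJV : IsGCS V JV) (hJW : IsGCS W JW)
    (μ : V ≃ₗ[ℝ] W)
    (hgraph : GenLagrangian (twistedProd V W JV JW) (LinearMap.graph μ.toLinearMap)) :
    (μ.prodCongr μ.symm.dualMap).toLinearMap ∘ₗ JV = JW ∘ₗ (μ.prodCongr μ.symm.dualMap).toLinearMap :=
  graph_genLagrangian_implies_iso_general V W JV JW μ hgraph
end

section
/- Let V, W, Z be finite-dimensional real vector spaces equipped with generalized complex structures, and let Γ ⊆ V ⊕ W and Φ ⊆ W ⊕ Z be subspaces. If Γ and Φ are generalized isotropic with respect to the twisted product structures on V ⊕ W and W ⊕ Z respectively, then the composition Φ∘Γ = {(v,z) ∈ V ⊕ Z : ∃ w ∈ W with (v,w) ∈ Γ and (w,z) ∈ Φ} is a generalized isotropic subspace of V ⊕ Z with respect to the twisted product structure. -/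
/-!
For the twisted product, `(u, v) ∈ Γ` being sent into `Γ ⊕ Ann(Γ)` says two things: the pair
of vector parts of `J_U(u,0)` and `J_V(v,0)` lies in `Γ`, and, because the twist flips the sign
of the `U*`-component, the covector parts agree along `Γ`: `J_U(u,0)₂ u' = J_V(v,0)₂ v'`. Both
conditions compose through relations: `J_W(w,0)₁` is a middle witness for the vector parts, and
the equalities of forms chain through the middle point `w'`.
-/

open Module LinearMap

section Comp

variable {V W Z : Type*} [AddCommGroup V] [Module ℝ V] [AddCommGroup W] [Module ℝ W]
  [AddCommGroup Z] [Module ℝ Z]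

/-- The composition `Φ∘Γ = {(v,z) : ∃ w, (v,w) ∈ Γ ∧ (w,z) ∈ Φ}` of linear relations. -/
def relComp (Γ : Submodule ℝ (V × W)) (Φ : Submodule ℝ (W × Z)) : Submodule ℝ (V × Z) where
  carrier := {p | ∃ w : W, (p.1, w) ∈ Γ ∧ (w, p.2) ∈ Φ}
  add_mem' := by
    rintro ⟨a, c⟩ ⟨a', c'⟩ ⟨w, h1, h2⟩ ⟨w', h1', h2'⟩
    exact ⟨w + w', Γ.add_mem h1 h1', Φ.add_mem h2 h2'⟩
  zero_mem' := ⟨0, Γ.zero_mem, Φ.zero_mem⟩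
  smul_mem' := by
    rintro r ⟨a, c⟩ ⟨w, h1, h2⟩
    exact ⟨r • w, Γ.smul_mem r h1, Φ.smul_mem r h2⟩

end Comp

section Apply

variable {U V : Type*} [AddCommGroup U] [Module ℝ U] [AddCommGroup V] [Module ℝ V]

lemma gcTwist_apply_inl (J : (U × Module.Dual ℝ U) →ₗ[ℝ] (U × Module.Dual ℝ U)) (u : U) :
    gcTwist U J (u, 0) = ((J (u, 0)).1, -(J (u, 0)).2) := by
  simp [gcTwist, ofBlocks, blk1, blk3]

lemma directSum_apply_inl (JU : (U × Module.Dual ℝ U) →ₗ[ℝ] (U × Module.Dual ℝ U))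
    (JV : (V × Module.Dual ℝ V) →ₗ[ℝ] (V × Module.Dual ℝ V)) (u : U) (v : V) :
    directSum U V JU JV ((u, v), 0) =
      (((JU (u, 0)).1, (JV (v, 0)).1), (JU (u, 0)).2.coprod (JV (v, 0)).2) := by
  simp [directSum, prodPack, Module.dualProdDualEquivDual, LinearMap.coprodEquiv]

lemma twistedProd_apply_inl (JU : (U × Module.Dual ℝ U) →ₗ[ℝ] (U × Module.Dual ℝ U))
    (JV : (V × Module.Dual ℝ V) →ₗ[ℝ] (V × Module.Dual ℝ V)) (u : U) (v : V) :
    twistedProd U V JU JV ((u, v), 0) =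
      (((JU (u, 0)).1, (JV (v, 0)).1), (-(JU (u, 0)).2).coprod (JV (v, 0)).2) := by
  rw [twistedProd, directSum_apply_inl, gcTwist_apply_inl]

lemma genIsotropic_twistedProd_iff
    (JU : (U × Module.Dual ℝ U) →ₗ[ℝ] (U × Module.Dual ℝ U))
    (JV : (V × Module.Dual ℝ V) →ₗ[ℝ] (V × Module.Dual ℝ V)) (Γ : Submodule ℝ (U × V)) :
    GenIsotropic (twistedProd U V JU JV) Γ ↔
      ∀ u v, (u, v) ∈ Γ → ((JU (u, 0)).1, (JV (v, 0)).1) ∈ Γ ∧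
        ∀ u' v', (u', v') ∈ Γ → (JU (u, 0)).2 u' = (JV (v, 0)).2 v' := by
  simp only [GenIsotropic, Prod.forall, twistedProd_apply_inl, Submodule.mem_prod,
    Submodule.mem_dualAnnihilator, LinearMap.coprod_apply, LinearMap.neg_apply,
    neg_add_eq_zero]

end Apply

theorem relComp_genIsotropic_general
    (V W Z : Type*) [AddCommGroup V] [Module ℝ V]
    [AddCommGroup W] [Module ℝ W]
    [AddCommGroup Z] [Module ℝ Z]
    (JV : (V × Module.Dual ℝ V) →ₗ[ℝ] (V × Module.Dual ℝ V))
    (JW : (W × Module.Dual ℝ W) →ₗ[ℝ] (W × Module.Dual ℝ W))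
    (JZ : (Z × Module.Dual ℝ Z) →ₗ[ℝ] (Z × Module.Dual ℝ Z))
    (Γ : Submodule ℝ (V × W)) (Φ : Submodule ℝ (W × Z))
    (hΓ : GenIsotropic (twistedProd V W JV JW) Γ)
    (hΦ : GenIsotropic (twistedProd W Z JW JZ) Φ) :
    GenIsotropic (twistedProd V Z JV JZ) (relComp Γ Φ) := by
  rw [genIsotropic_twistedProd_iff] at hΓ hΦ ⊢
  rintro v z ⟨w, hvw, hwz⟩
  obtain ⟨hΓ_mem, hΓ_form⟩ := hΓ v w hvw
  obtain ⟨hΦ_mem, hΦ_form⟩ := hΦ w z hwz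
  refine ⟨⟨(JW (w, 0)).1, hΓ_mem, hΦ_mem⟩, ?_⟩
  rintro v' z' ⟨w', hv'w', hw'z'⟩
  exact (hΓ_form v' w' hv'w').trans (hΦ_form w' z' hw'z')

theorem relComp_genIsotropic
    (V W Z : Type*) [AddCommGroup V] [Module ℝ V] [FiniteDimensional ℝ V]
    [AddCommGroup W] [Module ℝ W] [FiniteDimensional ℝ W]
    [AddCommGroup Z] [Module ℝ Z] [FiniteDimensional ℝ Z]
    (JV : (V × Module.Dual ℝ V) →ₗ[ℝ] (V × Module.Dual ℝ V))
    (JW : (W × Module.Dual ℝ W) →ₗ[ℝ] (W × Module.Dual ℝ W))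
    (JZ : (Z × Module.Dual ℝ Z) →ₗ[ℝ] (Z × Module.Dual ℝ Z))
    (hJV : IsGCS V JV) (hJW : IsGCS W JW) (hJZ : IsGCS Z JZ)
    (Γ : Submodule ℝ (V × W)) (Φ : Submodule ℝ (W × Z))
    (hΓ : GenIsotropic (twistedProd V W JV JW) Γ)
    (hΦ : GenIsotropic (twistedProd W Z JW JZ) Φ) :
    GenIsotropic (twistedProd V Z JV JZ) (relComp Γ Φ) :=
  relComp_genIsotropic_general V W Z JV JW JZ Γ Φ hΓ hΦ
end

section
/- Let V, W, Z be finite-dimensional real vector spaces equipped with generalized complex structures, and let Γ ⊆ V ⊕ W and Φ ⊆ W ⊕ Z be subspaces. If Γ and Φ are generalized coisotropic with respect to the twisted product structures on V ⊕ W and W ⊕ Z respectively, then the composition Φ∘Γ = {(v,z) ∈ V ⊕ Z : ∃ w ∈ W with (v,w) ∈ Γ and (w,z) ∈ Φ} is a generalized coisotropic subspace of V ⊕ Z with respect to the twisted product structure. -/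
open Module LinearMap

/-! A covector `(α, γ)` annihilates `Φ ∘ Γ` exactly when there is a middle covector `β` with
`(α, β) ∈ Ann Γ` and `(-β, γ) ∈ Ann Φ`. Applying the twisted structures to `(0, α ⊕ β)` and to
`(0, -β ⊕ γ)`, both hypotheses put the same vector `(J_W (0, β))₁` in the `W`-slot (in `W ⊕ Z` the
twist of `J_W` cancels the sign of `-β`), so the two images compose to the image of `(0, α ⊕ γ)`. -/

section RelComp

variable {V W Z : Type*} [AddCommGroup V] [Module ℝ V] [AddCommGroup W] [Module ℝ W]
  [AddCommGroup Z] [Module ℝ Z] {Γ : Submodule ℝ (V × W)} {Φ : Submodule ℝ (W × Z)}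

theorem coprod_mem_dualAnnihilator_relComp {α : Module.Dual ℝ V} {β : Module.Dual ℝ W}
    {γ : Module.Dual ℝ Z} (hΓ : α.coprod β ∈ Γ.dualAnnihilator)
    (hΦ : (-β).coprod γ ∈ Φ.dualAnnihilator) :
    α.coprod γ ∈ (relComp Γ Φ).dualAnnihilator := by
  rw [Submodule.mem_dualAnnihilator]
  rintro ⟨v, z⟩ ⟨w, hvw, hwz⟩
  have e1 := (Submodule.mem_dualAnnihilator _).mp hΓ _ hvw
  have e2 := (Submodule.mem_dualAnnihilator _).mp hΦ _ hwz
  simp only [coprod_apply, LinearMap.neg_apply] at e1 e2 ⊢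
  linarith

theorem exists_of_coprod_mem_dualAnnihilator_relComp {α : Module.Dual ℝ V}
    {γ : Module.Dual ℝ Z} (h : α.coprod γ ∈ (relComp Γ Φ).dualAnnihilator) :
    ∃ β : Module.Dual ℝ W, α.coprod β ∈ Γ.dualAnnihilator ∧
      (-β).coprod γ ∈ Φ.dualAnnihilator := by
  -- `Φ ∘ Γ` is the image of `(Γ × Φ) ∩ ker δ` under `q`; the annihilator of that intersection is
  -- `Ann (Γ × Φ) + range δ*`, and `β` is read off the `range δ*` summand.
  let q := LinearMap.prodMap (fst ℝ V W) (snd ℝ W Z)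
  let δ := (-snd ℝ V W).coprod (fst ℝ W Z)
  have hq : α.coprod γ ∘ₗ q ∈ (Γ.prod Φ ⊓ ker δ).dualAnnihilator := by
    rw [Submodule.mem_dualAnnihilator]
    rintro ⟨⟨v, w⟩, ⟨w', z⟩⟩ ⟨⟨hvw, hwz⟩, hδ⟩
    have hw : w = w' := by simpa [δ, neg_add_eq_zero] using hδ
    subst hw
    exact (Submodule.mem_dualAnnihilator _).mp h (v, z) ⟨w, hvw, hwz⟩
  rw [Subspace.dualAnnihilator_inf_eq, ← range_dualMap_eq_dualAnnihilator_ker] at hq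
  obtain ⟨g, hg, _, ⟨β, rfl⟩, hsum⟩ := Submodule.mem_sup.mp hq
  have hsplit (p) : α p.1.1 + γ p.2.2 = g p + β (p.2.1 - p.1.2) := by
    simpa [q, δ, neg_add_eq_sub] using (LinearMap.congr_fun hsum p).symm
  rw [Submodule.mem_dualAnnihilator] at hg
  refine ⟨β, ?_, ?_⟩ <;> rw [Submodule.mem_dualAnnihilator]
  · rintro ⟨v, w⟩ hvw
    have := hsplit ((v, w), (0, 0))
    rw [hg _ ⟨hvw, Φ.zero_mem⟩] at this
    simp only [coprod_apply, map_zero, add_zero, zero_add, zero_sub, map_neg] at this ⊢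
    linarith
  · rintro ⟨w, z⟩ hwz
    have := hsplit ((0, 0), (w, z))
    rw [hg _ ⟨Γ.zero_mem, hwz⟩] at this
    simp only [coprod_apply, LinearMap.neg_apply, map_zero, sub_zero, zero_add] at this ⊢
    linarith

theorem coprod_mem_dualAnnihilator_relComp_iff {α : Module.Dual ℝ V} {γ : Module.Dual ℝ Z} :
    α.coprod γ ∈ (relComp Γ Φ).dualAnnihilator ↔
      ∃ β : Module.Dual ℝ W, α.coprod β ∈ Γ.dualAnnihilator ∧
        (-β).coprod γ ∈ Φ.dualAnnihilator :=
  ⟨exists_of_coprod_mem_dualAnnihilator_relComp,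
    fun ⟨_, hΓ, hΦ⟩ => coprod_mem_dualAnnihilator_relComp hΓ hΦ⟩

end RelComp

section Twisted

variable {U V : Type*} [AddCommGroup U] [Module ℝ U] [AddCommGroup V] [Module ℝ V]

theorem prodPack_apply_coprod (x : U) (y : V) (a : Module.Dual ℝ U) (b : Module.Dual ℝ V) :
    prodPack U V ((x, y), a.coprod b) = ((x, a), (y, b)) := by
  simp [prodPack, LinearEquiv.prodProdProdComm]
  rfl

theorem gcTwist_apply_zero (J : (U × Module.Dual ℝ U) →ₗ[ℝ] (U × Module.Dual ℝ U))
    (a : Module.Dual ℝ U) : gcTwist U J (0, a) = (-(J (0, a)).1, (J (0, a)).2) := by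
  simp [gcTwist, ofBlocks, blk1, blk2, blk3, blk4, Prod.mk_zero_zero]

theorem twistedProd_apply_zero_coprod
    (JU : (U × Module.Dual ℝ U) →ₗ[ℝ] (U × Module.Dual ℝ U))
    (JV : (V × Module.Dual ℝ V) →ₗ[ℝ] (V × Module.Dual ℝ V))
    (a : Module.Dual ℝ U) (b : Module.Dual ℝ V) :
    twistedProd U V JU JV (0, a.coprod b) =
      ((-(JU (0, a)).1, (JV (0, b)).1), (JU (0, a)).2.coprod (JV (0, b)).2) := by
  rw [twistedProd, directSum, comp_apply, comp_apply, LinearEquiv.coe_coe, LinearEquiv.coe_coe,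
    LinearEquiv.symm_apply_eq, ← Prod.mk_zero_zero, prodPack_apply_coprod, prodPack_apply_coprod,
    prodMap_apply, gcTwist_apply_zero]

end Twisted

theorem relComp_genCoisotropic_general
    (V W Z : Type*) [AddCommGroup V] [Module ℝ V]
    [AddCommGroup W] [Module ℝ W]
    [AddCommGroup Z] [Module ℝ Z]
    (JV : (V × Module.Dual ℝ V) →ₗ[ℝ] (V × Module.Dual ℝ V))
    (JW : (W × Module.Dual ℝ W) →ₗ[ℝ] (W × Module.Dual ℝ W))
    (JZ : (Z × Module.Dual ℝ Z) →ₗ[ℝ] (Z × Module.Dual ℝ Z))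
    (Γ : Submodule ℝ (V × W)) (Φ : Submodule ℝ (W × Z))
    (hΓ : GenCoisotropic (twistedProd V W JV JW) Γ)
    (hΦ : GenCoisotropic (twistedProd W Z JW JZ) Φ) :
    GenCoisotropic (twistedProd V Z JV JZ) (relComp Γ Φ) := by
  intro f hf
  obtain ⟨α, γ, rfl⟩ : ∃ α γ, f = coprod α γ := ⟨_, _, (coprod_comp_inl_inr f).symm⟩
  obtain ⟨β, hαβ, hβγ⟩ := coprod_mem_dualAnnihilator_relComp_iff.mp hf
  have hJΓ := hΓ _ hαβ
  have hJΦ := hΦ _ hβγ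
  rw [twistedProd_apply_zero_coprod, Submodule.mem_prod] at hJΓ hJΦ
  rw [twistedProd_apply_zero_coprod, Submodule.mem_prod]
  have hJW_neg : JW (0, -β) = -JW (0, β) := by rw [← map_neg, Prod.neg_mk, neg_zero]
  simp only [hJW_neg, Prod.fst_neg, Prod.snd_neg, neg_neg] at hJΦ
  exact ⟨⟨_, hJΓ.1, hJΦ.1⟩, coprod_mem_dualAnnihilator_relComp_iff.mpr ⟨_, hJΓ.2, hJΦ.2⟩⟩

theorem relComp_genCoisotropic
    (V W Z : Type*) [AddCommGroup V] [Module ℝ V] [FiniteDimensional ℝ V]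
    [AddCommGroup W] [Module ℝ W] [FiniteDimensional ℝ W]
    [AddCommGroup Z] [Module ℝ Z] [FiniteDimensional ℝ Z]
    (JV : (V × Module.Dual ℝ V) →ₗ[ℝ] (V × Module.Dual ℝ V))
    (JW : (W × Module.Dual ℝ W) →ₗ[ℝ] (W × Module.Dual ℝ W))
    (JZ : (Z × Module.Dual ℝ Z) →ₗ[ℝ] (Z × Module.Dual ℝ Z))
    (hJV : IsGCS V JV) (hJW : IsGCS W JW) (hJZ : IsGCS Z JZ)
    (Γ : Submodule ℝ (V × W)) (Φ : Submodule ℝ (W × Z))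
    (hΓ : GenCoisotropic (twistedProd V W JV JW) Γ)
    (hΦ : GenCoisotropic (twistedProd W Z JW JZ) Φ) :
    GenCoisotropic (twistedProd V Z JV JZ) (relComp Γ Φ) :=
  relComp_genCoisotropic_general V W Z JV JW JZ Γ Φ hΓ hΦ
end

section
/- Let V, W, Z be finite-dimensional real vector spaces equipped with generalized complex structures, and let Γ ⊆ V ⊕ W and Φ ⊆ W ⊕ Z be subspaces. If Γ and Φ are generalized Lagrangian with respect to the twisted product structures on V ⊕ W and W ⊕ Z respectively, then the composition Φ∘Γ = {(v,z) ∈ V ⊕ Z : ∃ w ∈ W with (v,w) ∈ Γ and (w,z) ∈ Φ} is a generalized Lagrangian subspace of V ⊕ Z with respect to the twisted product structure. -/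
open Module LinearMap

/-!
Take `(v, z) ∈ Φ∘Γ` through `w` and `(φ, ζ) ∈ Ann(Φ∘Γ)`. The annihilator of a composite is the
composite of the annihilators up to a sign: there is `ψ ∈ W*` with `(φ, ψ) ∈ Ann Γ` and
`(-ψ, ζ) ∈ Ann Φ`. Applying the twisted structures to `((v, w), (φ, ψ))` and `((w, z), (-ψ, ζ))`,
the twist on the `W`-factor of `W ⊕ Z` undoes that sign, so both images pass through the same
`𝓙_W (w, ψ)` (with opposite signs on its dual part), and they glue to the image of
`((v, z), (φ, ζ))`.
-/

lemma dualProdDualEquivDual_mem_dualAnnihilator_iff {R M N : Type*} [CommSemiring R]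
    [AddCommMonoid M] [Module R M] [AddCommMonoid N] [Module R N]
    (S : Submodule R (M × N)) (f : Dual R M) (g : Dual R N) :
    dualProdDualEquivDual R M N (f, g) ∈ S.dualAnnihilator ↔ ∀ p ∈ S, f p.1 + g p.2 = 0 := by
  simp [Submodule.mem_dualAnnihilator, dualProdDualEquivDual_apply]

section Structures

variable {U V : Type*} [AddCommGroup U] [Module ℝ U] [AddCommGroup V] [Module ℝ V]

/-- The twist is the conjugate of `J` by `(x, f) ↦ (x, -f)`. -/
lemma gcTwist_apply (J : (V × Dual ℝ V) →ₗ[ℝ] (V × Dual ℝ V)) (x : V) (f : Dual ℝ V) :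
    gcTwist V J (x, f) = ((J (x, -f)).1, -(J (x, -f)).2) := by
  have hsplit : J (x, -f) = J (x, 0) - J (0, f) := by
    rw [← map_sub, Prod.mk_sub_mk, sub_zero, zero_sub]
  ext <;> simp [gcTwist, ofBlocks, blk1, blk2, blk3, blk4, hsplit] <;> abel

lemma prodPack_apply (x : U) (y : V) (f : Dual ℝ U) (g : Dual ℝ V) :
    prodPack U V ((x, y), dualProdDualEquivDual ℝ U V (f, g)) = ((x, f), (y, g)) := by
  simp only [prodPack, LinearEquiv.trans_apply, LinearEquiv.prodCongr_apply, LinearEquiv.refl_apply,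
    LinearEquiv.symm_apply_apply]
  rfl

lemma directSum_apply (JU : (U × Dual ℝ U) →ₗ[ℝ] (U × Dual ℝ U))
    (JV : (V × Dual ℝ V) →ₗ[ℝ] (V × Dual ℝ V)) (x : U) (y : V) (f : Dual ℝ U) (g : Dual ℝ V) :
    directSum U V JU JV ((x, y), dualProdDualEquivDual ℝ U V (f, g)) =
      (((JU (x, f)).1, (JV (y, g)).1), dualProdDualEquivDual ℝ U V ((JU (x, f)).2, (JV (y, g)).2)) := by
  simp only [directSum, comp_apply, LinearEquiv.coe_coe, prodPack_apply, prodMap_apply,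
    LinearEquiv.symm_apply_eq]

end Structures

section Composition

variable {V W Z : Type*} [AddCommGroup V] [Module ℝ V] [AddCommGroup W] [Module ℝ W]
  [AddCommGroup Z] [Module ℝ Z]

/-- A functional `(φ, ζ)` killing `Φ∘Γ` kills the kernel of `(v, w, z) ↦ ([v, w], [w, z])`,
hence factors through it. -/
lemma exists_dualAnnihilator_of_forall_relComp (Γ : Submodule ℝ (V × W))
    (Φ : Submodule ℝ (W × Z)) (φ : Dual ℝ V) (ζ : Dual ℝ Z)
    (h : ∀ p ∈ relComp Γ Φ, φ p.1 + ζ p.2 = 0) :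
    ∃ a ∈ Γ.dualAnnihilator, ∃ b ∈ Φ.dualAnnihilator,
      ∀ v w z, φ v + ζ z = a (v, w) + b (w, z) := by
  let T : (V × W) × Z →ₗ[ℝ] ((V × W) ⧸ Γ) × ((W × Z) ⧸ Φ) :=
    (Γ.mkQ ∘ₗ fst ℝ (V × W) Z).prod (Φ.mkQ ∘ₗ (snd ℝ V W).prodMap id)
  let G : Dual ℝ ((V × W) × Z) := φ ∘ₗ fst ℝ V W ∘ₗ fst ℝ (V × W) Z + ζ ∘ₗ snd ℝ (V × W) Z
  have hG : G ∈ (ker T).dualAnnihilator := by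
    rw [Submodule.mem_dualAnnihilator]
    rintro ⟨⟨v, w⟩, z⟩ hT
    have hvwz : (v, w) ∈ Γ ∧ (w, z) ∈ Φ := by simpa [T] using hT
    exact h (v, z) ⟨w, hvwz⟩
  obtain ⟨ℓ, hℓ⟩ := (range_dualMap_eq_dualAnnihilator_ker T).ge hG
  refine ⟨ℓ ∘ₗ inl ℝ _ _ ∘ₗ Γ.mkQ, ?_, ℓ ∘ₗ inr ℝ _ _ ∘ₗ Φ.mkQ, ?_, fun v w z => ?_⟩
  · refine (Submodule.mem_dualAnnihilator _).2 fun p hp => ?_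
    simp [(Submodule.Quotient.mk_eq_zero Γ).2 hp, Prod.mk_zero_zero]
  · refine (Submodule.mem_dualAnnihilator _).2 fun p hp => ?_
    simp [(Submodule.Quotient.mk_eq_zero Φ).2 hp, Prod.mk_zero_zero]
  · have hℓvwz : ℓ (Γ.mkQ (v, w), Φ.mkQ (w, z)) = φ v + ζ z := LinearMap.congr_fun hℓ ((v, w), z)
    rw [← hℓvwz, ← add_zero (Γ.mkQ (v, w)), ← zero_add (Φ.mkQ (w, z)), ← Prod.mk_add_mk, map_add]
    rfl

lemma dualProdDualEquivDual_mem_dualAnnihilator_relComp_iff (Γ : Submodule ℝ (V × W))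
    (Φ : Submodule ℝ (W × Z)) (φ : Dual ℝ V) (ζ : Dual ℝ Z) :
    dualProdDualEquivDual ℝ V Z (φ, ζ) ∈ (relComp Γ Φ).dualAnnihilator ↔
      ∃ ψ : Dual ℝ W, dualProdDualEquivDual ℝ V W (φ, ψ) ∈ Γ.dualAnnihilator ∧
        dualProdDualEquivDual ℝ W Z (-ψ, ζ) ∈ Φ.dualAnnihilator := by
  simp only [dualProdDualEquivDual_mem_dualAnnihilator_iff]
  constructor
  · intro h
    obtain ⟨a, ha, b, hb, hab⟩ := exists_dualAnnihilator_of_forall_relComp Γ Φ φ ζ h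
    rw [Submodule.mem_dualAnnihilator] at ha hb
    refine ⟨a ∘ₗ inr ℝ V W, ?_, ?_⟩
    · rintro ⟨v, w⟩ hvw
      have hv := hab v w 0
      have h0 := hab 0 w 0
      simp only [map_zero, add_zero] at hv h0
      simp only [comp_apply, inr_apply]
      linarith [ha _ hvw]
    · rintro ⟨w, z⟩ hwz
      have h0 := hab 0 w z
      simp only [map_zero, zero_add] at h0
      simp only [LinearMap.neg_apply, comp_apply, inr_apply]
      linarith [hb _ hwz]
  · rintro ⟨ψ, hΓ, hΦ⟩ ⟨v, z⟩ ⟨w, hvw, hwz⟩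
    linarith [hΓ _ hvw, hΦ _ hwz, LinearMap.neg_apply ψ w]

end Composition

theorem relComp_genLagrangian_general
    (V W Z : Type*) [AddCommGroup V] [Module ℝ V]
    [AddCommGroup W] [Module ℝ W]
    [AddCommGroup Z] [Module ℝ Z]
    (JV : (V × Module.Dual ℝ V) →ₗ[ℝ] (V × Module.Dual ℝ V))
    (JW : (W × Module.Dual ℝ W) →ₗ[ℝ] (W × Module.Dual ℝ W))
    (JZ : (Z × Module.Dual ℝ Z) →ₗ[ℝ] (Z × Module.Dual ℝ Z))
    (Γ : Submodule ℝ (V × W)) (Φ : Submodule ℝ (W × Z))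
    (hΓ : GenLagrangian (twistedProd V W JV JW) Γ)
    (hΦ : GenLagrangian (twistedProd W Z JW JZ) Φ) :
    GenLagrangian (twistedProd V Z JV JZ) (relComp Γ Φ) := by
  rintro ⟨⟨v, z⟩, F⟩ ⟨⟨w, hvw, hwz⟩, hF⟩
  obtain ⟨⟨φ, ζ⟩, rfl⟩ := (dualProdDualEquivDual ℝ V Z).surjective F
  obtain ⟨ψ, hφψ, hψζ⟩ := (dualProdDualEquivDual_mem_dualAnnihilator_relComp_iff Γ Φ φ ζ).1 hF
  have hJΓ := hΓ ((v, w), dualProdDualEquivDual ℝ V W (φ, ψ)) ⟨hvw, hφψ⟩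
  have hJΦ := hΦ ((w, z), dualProdDualEquivDual ℝ W Z (-ψ, ζ)) ⟨hwz, hψζ⟩
  rw [twistedProd, directSum_apply] at hJΓ hJΦ ⊢
  rw [gcTwist_apply, neg_neg] at hJΦ
  exact ⟨⟨_, hJΓ.1, hJΦ.1⟩,
    (dualProdDualEquivDual_mem_dualAnnihilator_relComp_iff Γ Φ _ _).2 ⟨_, hJΓ.2, hJΦ.2⟩⟩

theorem relComp_genLagrangian
    (V W Z : Type*) [AddCommGroup V] [Module ℝ V] [FiniteDimensional ℝ V]
    [AddCommGroup W] [Module ℝ W] [FiniteDimensional ℝ W]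
    [AddCommGroup Z] [Module ℝ Z] [FiniteDimensional ℝ Z]
    (JV : (V × Module.Dual ℝ V) →ₗ[ℝ] (V × Module.Dual ℝ V))
    (JW : (W × Module.Dual ℝ W) →ₗ[ℝ] (W × Module.Dual ℝ W))
    (JZ : (Z × Module.Dual ℝ Z) →ₗ[ℝ] (Z × Module.Dual ℝ Z))
    (hJV : IsGCS V JV) (hJW : IsGCS W JW) (hJZ : IsGCS Z JZ)
    (Γ : Submodule ℝ (V × W)) (Φ : Submodule ℝ (W × Z))
    (hΓ : GenLagrangian (twistedProd V W JV JW) Γ)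
    (hΦ : GenLagrangian (twistedProd W Z JW JZ) Φ) :
    GenLagrangian (twistedProd V Z JV JZ) (relComp Γ Φ) :=
  relComp_genLagrangian_general V W Z JV JW JZ Γ Φ hΓ hΦ
end

section
/- Let V, W, Z be finite-dimensional real vector spaces, Γ ⊆ V ⊕ W and Φ ⊆ W ⊕ Z subspaces, and Φ∘Γ = {(v,z) ∈ V ⊕ Z : ∃ w ∈ W with (v,w) ∈ Γ and (w,z) ∈ Φ} their composition. Then for (f,h) ∈ V* ⊕ Z*, one has (f,h) ∈ Ann(Φ∘Γ) if and only if there exists g ∈ W* such that (f,g) ∈ Ann(Γ) and (-g,h) ∈ Ann(Φ). -/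
open Module LinearMap

/-! `Φ∘Γ` is the image under `(v, w, z) ↦ (v, z)` of the preimage of `Γ × Φ` under
`(v, w, z) ↦ ((v, w), (w, z))`. Over a field the annihilator of a preimage is the image of the
annihilator under the dual map, so `(f, h)` annihilates `Φ∘Γ` iff `(v, w, z) ↦ f v + h z` equals
`(v, w, z) ↦ a v + b w + c w + d z` for some `(a, b) ∈ Ann Γ` and `(c, d) ∈ Ann Φ`, that is
`a = f`, `d = h` and `c = -b`; then `g = b`. -/

theorem Subspace.dualAnnihilator_comap {K V₁ V₂ : Type*} [Field K] [AddCommGroup V₁] [Module K V₁]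
    [AddCommGroup V₂] [Module K V₂] (P : V₁ →ₗ[K] V₂) (T : Subspace K V₂) :
    (T.comap P).dualAnnihilator = T.dualAnnihilator.map P.dualMap := by
  rw [← T.ker_mkQ, ← LinearMap.ker_comp, ← range_dualMap_eq_dualAnnihilator_ker,
    ← range_dualMap_eq_dualAnnihilator_ker, ← LinearMap.dualMap_comp_dualMap, LinearMap.range_comp]

section Products

variable {R M N P : Type*} [CommRing R] [AddCommGroup M] [Module R M] [AddCommGroup N] [Module R N]
  [AddCommGroup P] [Module R P]

theorem Submodule.dualAnnihilator_map (q : M →ₗ[R] N) (S : Submodule R M) :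
    (S.map q).dualAnnihilator = S.dualAnnihilator.comap q.dualMap := by
  ext φ
  simp [Submodule.mem_dualAnnihilator]

theorem Submodule.dualProdDualEquivDual_mem_dualAnnihilator_prod_iff
    (p : Submodule R M) (q : Submodule R N) (φ : Dual R M) (ψ : Dual R N) :
    dualProdDualEquivDual R M N (φ, ψ) ∈ (p.prod q).dualAnnihilator ↔
      φ ∈ p.dualAnnihilator ∧ ψ ∈ q.dualAnnihilator := by
  simp only [Submodule.mem_dualAnnihilator, dualProdDualEquivDual_apply, coprod_apply]
  refine ⟨fun H ↦ ⟨fun x hx ↦ ?_, fun y hy ↦ ?_⟩, fun ⟨hφ, hψ⟩ ⟨x, y⟩ ⟨hx, hy⟩ ↦ ?_⟩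
  · simpa using H (x, 0) ⟨hx, q.zero_mem⟩
  · simpa using H (0, y) ⟨p.zero_mem, hy⟩
  · simp [hφ x hx, hψ y hy]

variable (R M N P)

def LinearMap.splitMiddle : M × N × P →ₗ[R] (M × N) × (N × P) :=
  ((fst R M (N × P)).prod ((fst R N P).comp (snd R M (N × P)))).prod (snd R M (N × P))

def LinearMap.dropMiddle : M × N × P →ₗ[R] M × P :=
  (fst R M (N × P)).prod ((snd R N P).comp (snd R M (N × P)))

variable {R M N P}

theorem LinearMap.dualMap_splitMiddle_eq_dualMap_dropMiddle_iff (a f : Dual R M) (b c : Dual R N)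
    (d h : Dual R P) :
    (splitMiddle R M N P).dualMap
        (dualProdDualEquivDual R _ _ (dualProdDualEquivDual R M N (a, b),
          dualProdDualEquivDual R N P (c, d))) =
      (dropMiddle R M N P).dualMap (dualProdDualEquivDual R M P (f, h)) ↔
      a = f ∧ c = -b ∧ d = h := by
  have eval (v : M) (w : N) (z : P) :
      (splitMiddle R M N P).dualMap
        (dualProdDualEquivDual R _ _ (dualProdDualEquivDual R M N (a, b),
          dualProdDualEquivDual R N P (c, d))) (v, w, z) = a v + (b w + c w) + d z := by
    simp [splitMiddle]
    ring
  constructor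
  · intro H
    have key (v : M) (w : N) (z : P) : a v + (b w + c w) + d z = f v + h z := by
      rw [← eval, H]
      simp [dropMiddle]
    refine ⟨ext fun v ↦ by simpa using key v 0 0, ext fun w ↦ ?_,
      ext fun z ↦ by simpa using key 0 0 z⟩
    rw [neg_apply]
    linear_combination (by simpa using key 0 w 0 : b w + c w = 0)
  · rintro ⟨rfl, rfl, rfl⟩
    exact LinearMap.ext fun ⟨v, w, z⟩ ↦ by simp [splitMiddle, dropMiddle]

end Products

theorem relComp_eq_map_comap {V W Z : Type*} [AddCommGroup V] [Module ℝ V] [AddCommGroup W]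
    [Module ℝ W] [AddCommGroup Z] [Module ℝ Z] (Γ : Submodule ℝ (V × W)) (Φ : Submodule ℝ (W × Z)) :
    relComp Γ Φ = ((Γ.prod Φ).comap (splitMiddle ℝ V W Z)).map (dropMiddle ℝ V W Z) := by
  ext ⟨v, z⟩
  simp [relComp, splitMiddle, dropMiddle]

theorem mem_dualAnnihilator_relComp_iff_general
    (V W Z : Type*) [AddCommGroup V] [Module ℝ V]
    [AddCommGroup W] [Module ℝ W]
    [AddCommGroup Z] [Module ℝ Z]
    (Γ : Submodule ℝ (V × W)) (Φ : Submodule ℝ (W × Z))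
    (f : Module.Dual ℝ V) (h : Module.Dual ℝ Z) :
    Module.dualProdDualEquivDual ℝ V Z (f, h) ∈ (relComp Γ Φ).dualAnnihilator ↔
      ∃ g : Module.Dual ℝ W,
        Module.dualProdDualEquivDual ℝ V W (f, g) ∈ Γ.dualAnnihilator ∧
        Module.dualProdDualEquivDual ℝ W Z (-g, h) ∈ Φ.dualAnnihilator := by
  rw [relComp_eq_map_comap, Submodule.dualAnnihilator_map, Submodule.mem_comap,
    Subspace.dualAnnihilator_comap, Submodule.mem_map]
  constructor
  · rintro ⟨ψ, hψ, hψf⟩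
    obtain ⟨⟨α, β⟩, rfl⟩ := (dualProdDualEquivDual ℝ _ _).surjective ψ
    obtain ⟨⟨a, b⟩, rfl⟩ := (dualProdDualEquivDual ℝ V W).surjective α
    obtain ⟨⟨c, d⟩, rfl⟩ := (dualProdDualEquivDual ℝ W Z).surjective β
    obtain ⟨rfl, rfl, rfl⟩ := (dualMap_splitMiddle_eq_dualMap_dropMiddle_iff _ _ _ _ _ _).1 hψf
    exact ⟨b, (Submodule.dualProdDualEquivDual_mem_dualAnnihilator_prod_iff _ _ _ _).1 hψ⟩
  · rintro ⟨g, hΓ, hΦ⟩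
    exact ⟨_, (Submodule.dualProdDualEquivDual_mem_dualAnnihilator_prod_iff _ _ _ _).2 ⟨hΓ, hΦ⟩,
      (dualMap_splitMiddle_eq_dualMap_dropMiddle_iff _ _ _ _ _ _).2 ⟨rfl, rfl, rfl⟩⟩

theorem mem_dualAnnihilator_relComp_iff
    (V W Z : Type*) [AddCommGroup V] [Module ℝ V] [FiniteDimensional ℝ V]
    [AddCommGroup W] [Module ℝ W] [FiniteDimensional ℝ W]
    [AddCommGroup Z] [Module ℝ Z] [FiniteDimensional ℝ Z]
    (Γ : Submodule ℝ (V × W)) (Φ : Submodule ℝ (W × Z))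
    (f : Module.Dual ℝ V) (h : Module.Dual ℝ Z) :
    Module.dualProdDualEquivDual ℝ V Z (f, h) ∈ (relComp Γ Φ).dualAnnihilator ↔
      ∃ g : Module.Dual ℝ W,
        Module.dualProdDualEquivDual ℝ V W (f, g) ∈ Γ.dualAnnihilator ∧
        Module.dualProdDualEquivDual ℝ W Z (-g, h) ∈ Φ.dualAnnihilator :=
  mem_dualAnnihilator_relComp_iff_general V W Z Γ Φ f h
end

section
/- Let 𝓙 = [[𝓙₁,𝓙₂],[𝓙₃,𝓙₄]] be a generalized complex structure on a finite-dimensional real vector space V. Then 𝓙 is B-symplectic if and only if 𝓙₂ : V* → V is an isomorphism, and 𝓙 is β-symplectic if and only if 𝓙₃ : V → V* is an isomorphism. -/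
open Module LinearMap

section Blocks

variable (V : Type*) [AddCommGroup V] [Module ℝ V]

/-- Skew-symmetry for a map `V → V*`. -/
def SkewF (B : V →ₗ[ℝ] Module.Dual ℝ V) : Prop := ∀ u v : V, B u v = -(B v u)

/-- Skew-symmetry for a map `V* → V`. -/
def SkewB (β : Module.Dual ℝ V →ₗ[ℝ] V) : Prop :=
  ∀ f g : Module.Dual ℝ V, f (β g) = -(g (β f))

/-- The B-field automorphism `[[1,0],[B,1]]`. -/
noncomputable def calB (B : V →ₗ[ℝ] Module.Dual ℝ V) :
    (V × Module.Dual ℝ V) →ₗ[ℝ] (V × Module.Dual ℝ V) :=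
  ofBlocks V LinearMap.id 0 B LinearMap.id

/-- The β-field automorphism `[[1,β],[0,1]]`. -/
noncomputable def calBeta (β : Module.Dual ℝ V →ₗ[ℝ] V) :
    (V × Module.Dual ℝ V) →ₗ[ℝ] (V × Module.Dual ℝ V) :=
  ofBlocks V LinearMap.id β 0 LinearMap.id

/-- A GCS is complex if it equals `[[J,0],[0,-J*]]` for a complex structure `J` on `V`. -/
noncomputable def IsComplexGCS (J : (V × Module.Dual ℝ V) →ₗ[ℝ] (V × Module.Dual ℝ V)) :
    Prop :=
  ∃ Jc : V →ₗ[ℝ] V, Jc ∘ₗ Jc = -LinearMap.id ∧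
    J = ofBlocks V Jc 0 0 (-(Jc.dualMap))

/-- A GCS is symplectic if it equals `[[0,-ω⁻¹],[ω,0]]` for a nondegenerate
skew-symmetric `ω : V → V*`. -/
noncomputable def IsSymplecticGCS (J : (V × Module.Dual ℝ V) →ₗ[ℝ] (V × Module.Dual ℝ V)) :
    Prop :=
  ∃ (ω : V →ₗ[ℝ] Module.Dual ℝ V) (ω' : Module.Dual ℝ V →ₗ[ℝ] V),
    SkewF V ω ∧ ω' ∘ₗ ω = LinearMap.id ∧ ω ∘ₗ ω' = LinearMap.id ∧
      J = ofBlocks V 0 (-ω') ω 0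

/-- B-field transform of a complex GCS. -/
noncomputable def IsBComplex (J : (V × Module.Dual ℝ V) →ₗ[ℝ] (V × Module.Dual ℝ V)) :
    Prop :=
  ∃ B : V →ₗ[ℝ] Module.Dual ℝ V, SkewF V B ∧
    ∃ J₀, IsComplexGCS V J₀ ∧ J = calB V B ∘ₗ J₀ ∘ₗ calB V (-B)

/-- β-field transform of a complex GCS. -/
noncomputable def IsBetaComplex (J : (V × Module.Dual ℝ V) →ₗ[ℝ] (V × Module.Dual ℝ V)) :
    Prop :=
  ∃ β : Module.Dual ℝ V →ₗ[ℝ] V, SkewB V β ∧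
    ∃ J₀, IsComplexGCS V J₀ ∧ J = calBeta V β ∘ₗ J₀ ∘ₗ calBeta V (-β)

/-- B-field transform of a symplectic GCS. -/
noncomputable def IsBSymplectic (J : (V × Module.Dual ℝ V) →ₗ[ℝ] (V × Module.Dual ℝ V)) :
    Prop :=
  ∃ B : V →ₗ[ℝ] Module.Dual ℝ V, SkewF V B ∧
    ∃ J₀, IsSymplecticGCS V J₀ ∧ J = calB V B ∘ₗ J₀ ∘ₗ calB V (-B)

/-- β-field transform of a symplectic GCS. -/
noncomputable def IsBetaSymplectic (J : (V × Module.Dual ℝ V) →ₗ[ℝ] (V × Module.Dual ℝ V)) :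
    Prop :=
  ∃ β : Module.Dual ℝ V →ₗ[ℝ] V, SkewB V β ∧
    ∃ J₀, IsSymplecticGCS V J₀ ∧ J = calBeta V β ∘ₗ J₀ ∘ₗ calBeta V (-β)

end Blocks

section AuxProof

variable {V : Type*} [AddCommGroup V] [Module ℝ V]

lemma ofBlocks_apply' (A : V →ₗ[ℝ] V) (B : Module.Dual ℝ V →ₗ[ℝ] V)
    (C : V →ₗ[ℝ] Module.Dual ℝ V) (D : Module.Dual ℝ V →ₗ[ℝ] Module.Dual ℝ V)
    (x : V × Module.Dual ℝ V) :
    ofBlocks V A B C D x = (A x.1 + B x.2, C x.1 + D x.2) := rfl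

lemma calB_apply' (B : V →ₗ[ℝ] Module.Dual ℝ V) (x : V × Module.Dual ℝ V) :
    calB V B x = (x.1, B x.1 + x.2) := by
  simp [calB, ofBlocks_apply']

lemma calBeta_apply' (β : Module.Dual ℝ V →ₗ[ℝ] V) (x : V × Module.Dual ℝ V) :
    calBeta V β x = (x.1 + β x.2, x.2) := by
  simp [calBeta, ofBlocks_apply']

lemma J_decomp (J : (V × Module.Dual ℝ V) →ₗ[ℝ] (V × Module.Dual ℝ V))
    (x : V × Module.Dual ℝ V) :
    J x = (blk1 V J x.1 + blk2 V J x.2, blk3 V J x.1 + blk4 V J x.2) := by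
  obtain ⟨v, f⟩ := x
  have h : ((v, f) : V × Module.Dual ℝ V) = (v, 0) + (0, f) := by simp
  rw [show J (v, f) = J (v, 0) + J (0, f) from by rw [← map_add]; exact congrArg _ h]
  rfl

end AuxProof

theorem bSymplectic_iff_blk2_bijective_and_betaSymplectic_iff_blk3_bijective
    (V : Type*) [AddCommGroup V] [Module ℝ V] [FiniteDimensional ℝ V]
    (J : (V × Module.Dual ℝ V) →ₗ[ℝ] (V × Module.Dual ℝ V)) (hJ : IsGCS V J) :
    (IsBSymplectic V J ↔ Function.Bijective (blk2 V J)) ∧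
    (IsBetaSymplectic V J ↔ Function.Bijective (blk3 V J)) := by
  obtain ⟨hsq, hpair⟩ := hJ
  set A := blk1 V J with hAdef
  set B2 := blk2 V J with hB2def
  set C := blk3 V J with hCdef
  set D := blk4 V J with hDdef
  have hsq' : ∀ x, J (J x) = -x := by
    intro x
    have h := LinearMap.congr_fun hsq x
    simpa using h
  have happ : ∀ x : V × Module.Dual ℝ V, J x = (A x.1 + B2 x.2, C x.1 + D x.2) :=
    J_decomp J
  -- square relations
  have hQ : ∀ (v : V) (f : Module.Dual ℝ V),
      A (A v + B2 f) + B2 (C v + D f) = -v ∧ C (A v + B2 f) + D (C v + D f) = -f := by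
    intro v f
    have h := hsq' (v, f)
    rw [happ (v, f), happ (A (v, f).1 + B2 (v, f).2, C (v, f).1 + D (v, f).2)] at h
    simpa [Prod.ext_iff] using h
  have hQ1 : ∀ v : V, A (A v) + B2 (C v) = -v := by
    intro v; have h := (hQ v 0).1; simpa using h
  have hQ2 : ∀ v : V, C (A v) + D (C v) = 0 := by
    intro v; have h := (hQ v 0).2; simpa using h
  have hQ3 : ∀ f : Module.Dual ℝ V, A (B2 f) + B2 (D f) = 0 := by
    intro f; have h := (hQ 0 f).1; simpa using h
  have hQ4 : ∀ f : Module.Dual ℝ V, C (B2 f) + D (D f) = -f := by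
    intro f; have h := (hQ 0 f).2; simpa using h
  -- pairing relations
  have hnegl : ∀ x y : V × Module.Dual ℝ V, gcPair V (-x) y = -gcPair V x y := by
    intro x y; simp [gcPair]; ring
  have hskew : ∀ x y : V × Module.Dual ℝ V, gcPair V (J x) y = -gcPair V x (J y) := by
    intro x y
    have h := hpair (J x) y
    rw [hsq' x, hnegl] at h
    linarith
  have hS1 : ∀ v w : V, C v w = -(C w v) := by
    intro v w
    have h := hskew (v, 0) (w, 0)
    rw [happ (v, 0), happ (w, 0)] at h
    simp [gcPair] at h
    linarith
  have hS2 : ∀ f g : Module.Dual ℝ V, g (B2 f) = -(f (B2 g)) := by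
    intro f g
    have h := hskew (0, f) (0, g)
    rw [happ (0, f), happ (0, g)] at h
    simp [gcPair] at h
    linarith
  have hS3 : ∀ (g : Module.Dual ℝ V) (v : V), D g v = -(g (A v)) := by
    intro g v
    have h := hskew (v, 0) (0, g)
    rw [happ (v, 0), happ (0, g)] at h
    simp [gcPair] at h
    linarith
  constructor
  · constructor
    · rintro ⟨B, hB, J₀, ⟨ω, ω', hω, h1, h2, rfl⟩, hJeq⟩
      have h1' : ∀ v, ω' (ω v) = v := fun v => by simpa using LinearMap.congr_fun h1 v
      have h2' : ∀ f, ω (ω' f) = f := fun f => by simpa using LinearMap.congr_fun h2 f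
      have hblk : ∀ f, B2 f = -(ω' f) := by
        intro f
        have hr : B2 f = (J (0, f)).1 := rfl
        rw [hr, hJeq]
        simp [calB_apply', ofBlocks_apply', LinearMap.comp_apply]
      constructor
      · intro f g hfg
        rw [hblk f, hblk g, neg_inj] at hfg
        calc f = ω (ω' f) := (h2' f).symm
        _ = ω (ω' g) := by rw [hfg]
        _ = g := h2' g
      · intro v
        refine ⟨-(ω v), ?_⟩
        rw [hblk, map_neg, neg_neg, h1']
    · intro hb
      set e := LinearEquiv.ofBijective B2 hb with hedef
      have he1 : ∀ f, e.symm (B2 f) = f := fun f => e.symm_apply_apply f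
      have he2 : ∀ v, B2 (e.symm v) = v := fun v => e.apply_symm_apply v
      have hAB : ∀ p, A (B2 p) = -(B2 (D p)) := fun p =>
        eq_neg_of_add_eq_zero_left (hQ3 p)
      have hDskew : ∀ p q, D p (B2 q) = -(D q (B2 p)) := by
        intro p q
        rw [hS3 p (B2 q), hAB q, map_neg, neg_neg, hS2 (D q) p]
      have key1 : ∀ u w : V, (e.symm (A u)) w = -((e.symm (A w)) u) := by
        intro u w
        obtain ⟨p, rfl⟩ := hb.surjective u
        obtain ⟨q, rfl⟩ := hb.surjective w
        rw [hAB p, hAB q, map_neg, map_neg, he1, he1, LinearMap.neg_apply,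
          LinearMap.neg_apply, hDskew p q]
      have key2 : ∀ v w : V, (e.symm v) w = -((e.symm w) v) := by
        intro v w
        obtain ⟨p, rfl⟩ := hb.surjective v
        obtain ⟨q, rfl⟩ := hb.surjective w
        rw [he1, he1]
        exact hS2 q p
      have keyC : ∀ v, C v = -(e.symm (A (A v))) - e.symm v := by
        intro v
        apply hb.injective
        rw [map_sub, map_neg, he2, he2]
        have h2 : B2 (C v) = -v - A (A v) := by rw [← hQ1 v]; abel
        rw [h2]; abel
      refine ⟨-(e.symm.toLinearMap ∘ₗ A), ?_, ofBlocks V 0 B2 (-(e.symm.toLinearMap)) 0,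
        ⟨-(e.symm.toLinearMap), -B2, ?_, ?_, ?_, by rw [neg_neg]⟩, ?_⟩
      · intro u v
        simp only [LinearMap.neg_apply, LinearMap.comp_apply, LinearEquiv.coe_coe]
        rw [key1 u v, neg_neg]
      · intro v w
        simp only [LinearMap.neg_apply, LinearMap.comp_apply, LinearEquiv.coe_coe]
        rw [key2 v w, neg_neg]
      · apply LinearMap.ext; intro v
        simp [he2]
      · apply LinearMap.ext; intro f
        simp [he1]
      · apply LinearMap.ext
        rintro ⟨v, f⟩
        rw [happ (v, f)]
        simp only [LinearMap.comp_apply, calB_apply', ofBlocks_apply',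
          LinearMap.neg_apply, LinearMap.zero_apply, LinearEquiv.coe_coe,
          neg_neg, zero_add, add_zero, map_add, map_neg, he2]
        refine Prod.ext ?_ ?_
        · simp
        · simp only []
          rw [keyC v]
          have h3 : e.symm (A (B2 f)) = -(D f) := by rw [hAB f, map_neg, he1]
          rw [h3]
          abel
  · constructor
    · rintro ⟨β, hβ, J₀, ⟨ω, ω', hω, h1, h2, rfl⟩, hJeq⟩
      have h1' : ∀ v, ω' (ω v) = v := fun v => by simpa using LinearMap.congr_fun h1 v
      have h2' : ∀ f, ω (ω' f) = f := fun f => by simpa using LinearMap.congr_fun h2 f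
      have hblk : ∀ v, C v = ω v := by
        intro v
        have hr : C v = (J (v, 0)).2 := rfl
        rw [hr, hJeq]
        simp [calBeta_apply', ofBlocks_apply', LinearMap.comp_apply]
      constructor
      · intro v w hvw
        rw [hblk v, hblk w] at hvw
        calc v = ω' (ω v) := (h1' v).symm
        _ = ω' (ω w) := by rw [hvw]
        _ = w := h1' w
      · intro f
        exact ⟨ω' f, by rw [hblk, h2']⟩
    · intro hc
      set e := LinearEquiv.ofBijective C hc with hedef
      have he1 : ∀ v, e.symm (C v) = v := fun v => e.symm_apply_apply v
      have he2 : ∀ f, C (e.symm f) = f := fun f => e.apply_symm_apply f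
      have hCA : ∀ v, C (A v) = -(D (C v)) := fun v =>
        eq_neg_of_add_eq_zero_left (hQ2 v)
      have hCAskew : ∀ u v : V, (C u) (A v) = -((C v) (A u)) := by
        intro u v
        rw [hS1 u (A v), hCA v, LinearMap.neg_apply, neg_neg, hS3 (C v) u]
      have keyB2 : ∀ f, B2 f = -(e.symm f) + A (e.symm (D f)) := by
        intro f
        apply hc.injective
        rw [map_add, map_neg, he2, hCA (e.symm (D f)), he2]
        have h2 : C (B2 f) = -f - D (D f) := by rw [← hQ4 f]; abel
        rw [h2]; abel
      refine ⟨A ∘ₗ e.symm.toLinearMap, ?_, ofBlocks V 0 (-(e.symm.toLinearMap)) C 0,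
        ⟨C, e.symm.toLinearMap, hS1, ?_, ?_, rfl⟩, ?_⟩
      · intro f g
        simp only [LinearMap.comp_apply, LinearEquiv.coe_coe]
        obtain ⟨u, rfl⟩ := hc.surjective f
        obtain ⟨v, rfl⟩ := hc.surjective g
        rw [he1, he1]
        exact hCAskew u v
      · apply LinearMap.ext; intro v
        simp [he1]
      · apply LinearMap.ext; intro f
        simp [he2]
      · apply LinearMap.ext
        rintro ⟨v, f⟩
        rw [happ (v, f)]
        simp only [LinearMap.comp_apply, calBeta_apply', ofBlocks_apply',
          LinearMap.neg_apply, LinearMap.zero_apply, LinearEquiv.coe_coe,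
          neg_neg, zero_add, add_zero, map_add, map_neg, hCA, he2, he1]
        refine Prod.ext ?_ ?_
        · simp only []
          rw [keyB2 f]
          abel
        · simp
end

section
/- Let 𝓙 = [[𝓙₁,𝓙₂],[𝓙₃,𝓙₄]] be a generalized complex structure on a finite-dimensional real vector space V. Then 𝓙 is symplectic if and only if 𝓙₁ = 0. -/
open Module LinearMap

theorem symplectic_iff_blk1_eq_zero
    (V : Type*) [AddCommGroup V] [Module ℝ V] [FiniteDimensional ℝ V]
    (J : (V × Module.Dual ℝ V) →ₗ[ℝ] (V × Module.Dual ℝ V)) (hJ : IsGCS V J) :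
    IsSymplecticGCS V J ↔ blk1 V J = 0 := by
  constructor
  · rintro ⟨ω, ω', hsk, h1, h2, rfl⟩
    ext v
    simp [blk1, ofBlocks]
  · intro hA
    set Bm := blk2 V J with hBmdef
    set C := blk3 V J with hCdef
    set D := blk4 V J with hDdef
    have hx : ∀ v f, J (v, f) = (Bm f, C v + D f) := by
      intro v f
      have hsplit : (v, f) = ((v, 0) : V × Module.Dual ℝ V) + (0, f) := by simp
      have h1 : (J (v, (0 : Module.Dual ℝ V))).1 = 0 := by
        have := congrFun (congrArg DFunLike.coe hA) v
        simpa [blk1] using this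
      have h2 : (J (v, (0 : Module.Dual ℝ V))).2 = C v := by simp [hCdef, blk3]
      have h3 : (J ((0 : V), f)).1 = Bm f := by simp [hBmdef, blk2]
      have h4 : (J ((0 : V), f)).2 = D f := by simp [hDdef, blk4]
      rw [hsplit, map_add]
      ext
      · simp [h1, h3]
      · simp [h2, h4, add_comm]
    have hsq : ∀ x, J (J x) = -x := by
      intro x
      have := LinearMap.ext_iff.mp hJ.1 x
      simpa using this
    have hBC : ∀ v : V, Bm (C v) = -v := by
      intro v
      have := hsq (v, 0)
      rw [hx v 0] at this
      simp only [map_zero, add_zero, zero_add] at this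
      rw [hx 0 (C v)] at this
      have := congrArg Prod.fst this
      simpa using this
    have hBD : ∀ f, Bm (D f) = 0 := by
      intro f
      have := hsq (0, f)
      rw [hx 0 f] at this
      simp only [map_zero, zero_add] at this
      rw [hx (Bm f) (D f)] at this
      have := congrArg Prod.fst this
      simpa using this
    have hCBD : ∀ f, C (Bm f) + D (D f) = -f := by
      intro f
      have := hsq (0, f)
      rw [hx 0 f] at this
      simp only [map_zero, zero_add] at this
      rw [hx (Bm f) (D f)] at this
      have := congrArg Prod.snd this
      simpa using this
    have hpair1 : ∀ (v : V) (g : Module.Dual ℝ V), (C v) (Bm g) = g v := by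
      intro v g
      have := hJ.2 (v, 0) (0, g)
      rw [hx v 0, hx 0 g] at this
      simp only [map_zero, add_zero, zero_add, gcPair, LinearMap.zero_apply] at this
      linarith
    have hBinj : ∀ g : Module.Dual ℝ V, Bm g = 0 → g = 0 := by
      intro g hg
      ext v
      have := hpair1 v g
      rw [hg] at this
      simpa using this.symm
    have hD0 : ∀ f, D f = 0 := fun f => hBinj _ (hBD f)
    have hCB : ∀ f, C (Bm f) = -f := by
      intro f
      have := hCBD f
      rw [hD0 (D f)] at this
      simpa using this
    have hskew : ∀ u v : V, C u v = -(C v u) := by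
      intro u v
      have hsurj : Bm (-(C v)) = v := by rw [map_neg, hBC]; simp
      have := hpair1 u (-(C v))
      rw [hsurj] at this
      simpa using this
    refine ⟨C, -Bm, hskew, ?_, ?_, ?_⟩
    · ext v; simp [hBC v]
    · ext f v
      simp only [LinearMap.coe_comp, Function.comp_apply, LinearMap.neg_apply, map_neg,
        LinearMap.id_coe, id_eq]
      rw [hCB f]
      simp
    · apply LinearMap.ext
      rintro ⟨v, f⟩
      rw [hx v f]
      ext
      · simp [ofBlocks]
      · simp [ofBlocks, hD0]
end
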